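/- Let A: \overline{B}^k → [0,∞) be a C² function on the closed unit ball in ℝ^k satisfying −(1/c₀)·Id ≤ D²A(u) ≤ −c₀·Id for all u and having its unique maximum at a point m ∈ B^k_{c₀/√10}. Let φ(u,t) be the flow of the vector field u ↦ −(1−|u|²)∇A(u) on \overline{B}^k. Then for any δ < 1/4 there exists T = T(δ, c₀, A) ≥ 0 such that for every v ∈ \overline{B}^k with |v − m| ≥ δ, one has A(φ(v,T)) < A(0) − c₀/10 and |φ(v,T)| > c₀/4. -/

import Mathlib

/-!
Along the segment from the maximum point `m` (where `∇A m = 0`), the Hessian pinching gives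
`⟪∇A u, u - m⟫ ≤ -c₀ ‖u - m‖²` and `A m - ‖u - m‖² / (2 c₀) ≤ A u ≤ A m - c₀ ‖u - m‖² / 2`.
Along the flow `A` decreases, and by the first inequality `‖u - m‖` increases, so it stays `≥ δ`.
As long as `A ≥ A m - c₀ / 6` the flow stays where `‖u - m‖² ≤ 1 / 3`; since `‖m‖² < 1 / 10`
this forces `1 - ‖u‖² ≥ 1 / 5`, while `‖∇A u‖ ≥ c₀ δ`. Hence `A` drops at rate at least
`c₀² δ² / 5`, and at time `T = 1 / (c₀ δ²)` it is below `A m - c₀ / 6`. The quadratic lower bound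
then gives both conclusions: `A 0 > A m - c₀ / 20`, and `‖φ v T - m‖² > c₀² / 3`.
-/

open Metric Set
open scoped RealInnerProductSpace Gradient

lemma antitoneOn_of_hasDerivAt_nonpos {D : Set ℝ} (hD : Convex ℝ D) {f f' : ℝ → ℝ}
    (hf : ∀ x ∈ D, HasDerivAt f (f' x) x) (hf' : ∀ x ∈ D, f' x ≤ 0) : AntitoneOn f D :=
  antitoneOn_of_hasDerivWithinAt_nonpos hD (fun x hx => (hf x hx).continuousAt.continuousWithinAt)
    (fun x hx => (hf x (interior_subset hx)).hasDerivWithinAt)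
    (fun x hx => hf' x (interior_subset hx))

lemma monotoneOn_of_hasDerivAt_nonneg {D : Set ℝ} (hD : Convex ℝ D) {f f' : ℝ → ℝ}
    (hf : ∀ x ∈ D, HasDerivAt f (f' x) x) (hf' : ∀ x ∈ D, 0 ≤ f' x) : MonotoneOn f D :=
  monotoneOn_of_hasDerivWithinAt_nonneg hD (fun x hx => (hf x hx).continuousAt.continuousWithinAt)
    (fun x hx => (hf x (interior_subset hx)).hasDerivWithinAt)
    (fun x hx => hf' x (interior_subset hx))

lemma taylor_le_of_deriv2_le {f f' f'' : ℝ → ℝ} {C : ℝ}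
    (hf : ∀ t ∈ Icc (0 : ℝ) 1, HasDerivAt f (f' t) t)
    (hf' : ∀ t ∈ Icc (0 : ℝ) 1, HasDerivAt f' (f'' t) t)
    (hC : ∀ t ∈ Icc (0 : ℝ) 1, f'' t ≤ C) :
    f' 1 ≤ f' 0 + C ∧ f 1 ≤ f 0 + f' 0 + C / 2 := by
  have hslope : ∀ t ∈ Icc (0 : ℝ) 1, f' t ≤ f' 0 + C * t := by
    have := antitoneOn_of_hasDerivAt_nonpos (convex_Icc 0 1) (f := fun t => f' t - C * t)
      (fun t ht => (hf' t ht).sub ((hasDerivAt_id' t).const_mul C))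
      (fun t ht => by linarith [hC t ht])
    intro t ht
    linarith [this (left_mem_Icc.2 zero_le_one) ht ht.1]
  have hquad := antitoneOn_of_hasDerivAt_nonpos (convex_Icc 0 1)
    (f := fun t => f t - f' 0 * t - C / 2 * t ^ 2)
    (fun t ht => ((hf t ht).sub ((hasDerivAt_id' t).const_mul (f' 0))).sub
      ((hasDerivAt_pow 2 t).const_mul (C / 2)))
    (fun t ht => by simp only [mul_one, Nat.cast_ofNat]; linarith [hslope t ht])
    (left_mem_Icc.2 zero_le_one) (right_mem_Icc.2 zero_le_one) zero_le_one
  refine ⟨by linarith [hslope 1 (right_mem_Icc.2 zero_le_one)], ?_⟩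
  simp only at hquad
  linarith

section Norms

variable {F : Type*} [SeminormedAddCommGroup F] {u v m : F} {c : ℝ}

lemma mul_norm_le_norm_of_inner_le_neg_mul_sq [InnerProductSpace ℝ F]
    (h : ⟪u, v⟫ ≤ -c * ‖v‖ ^ 2) : c * ‖v‖ ≤ ‖u‖ := by
  rcases (norm_nonneg v).eq_or_lt with hv | hv
  · rw [← hv, mul_zero]
    exact norm_nonneg u
  · have hcs : -⟪u, v⟫ ≤ ‖u‖ * ‖v‖ := (neg_le_abs _).trans (abs_real_inner_le_norm u v)
    exact le_of_mul_le_mul_right (by nlinarith) hv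

lemma one_fifth_le_one_sub_norm_sq (hum : ‖u - m‖ ^ 2 ≤ 1 / 3) (hm : ‖m‖ ^ 2 < 1 / 10) :
    1 / 5 ≤ 1 - ‖u‖ ^ 2 := by
  have htri := norm_le_norm_add_norm_sub' u m
  nlinarith [norm_nonneg u, norm_nonneg (u - m), norm_nonneg m, sq_nonneg (‖u - m‖ - 2 * ‖m‖)]

lemma lt_norm_of_sq_lt_norm_sub_sq (hum : c ^ 2 / 3 < ‖u - m‖ ^ 2)
    (hm : ‖m‖ ^ 2 < c ^ 2 / 10) : c / 4 < ‖u‖ := by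
  have htri := norm_le_norm_add_norm_sub' (u - m) u
  simp only [sub_sub_cancel_left, norm_neg] at htri
  nlinarith [norm_nonneg u, norm_nonneg (u - m), norm_nonneg m, sq_nonneg (c - 3 * ‖m‖)]

end Norms

section Hessian

variable {E : Type*} [NormedAddCommGroup E] [InnerProductSpace ℝ E] [CompleteSpace E]
  {A : E → ℝ} {s : Set E} {x y : E} {c C : ℝ}

lemma IsLocalMax.gradient_eq_zero (h : IsLocalMax A x) : ∇ A x = 0 := by
  simp [gradient, h.fderiv_eq_zero]

lemma ContDiff.differentiable_gradient (hA : ContDiff ℝ 2 A) : Differentiable ℝ (∇ A) :=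
  (((InnerProductSpace.toDual ℝ E).symm.contDiff.comp
    (hA.fderiv_right (m := 1) (by norm_num))).differentiable one_ne_zero)

lemma hasDerivAt_comp_add_smul (hA : Differentiable ℝ A) (x w : E) (t : ℝ) :
    HasDerivAt (fun t : ℝ => A (x + t • w)) ⟪∇ A (x + t • w), w⟫ t := by
  have hline : HasDerivAt (fun t : ℝ => x + t • w) w t := by
    simpa using ((hasDerivAt_id t).smul_const w).const_add x
  have := (hA _).hasGradientAt.hasFDerivAt.comp_hasDerivAt t hline
  rwa [InnerProductSpace.toDual_apply_apply] at this

lemma hasDerivAt_inner_gradient_comp_add_smul (hA : Differentiable ℝ (∇ A)) (x w : E) (t : ℝ) :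
    HasDerivAt (fun t : ℝ => ⟪∇ A (x + t • w), w⟫) ⟪fderiv ℝ (∇ A) (x + t • w) w, w⟫ t := by
  have hline : HasDerivAt (fun t : ℝ => x + t • w) w t := by
    simpa using ((hasDerivAt_id t).smul_const w).const_add x
  simpa using ((hA _).hasFDerivAt.comp_hasDerivAt t hline).inner ℝ (hasDerivAt_const t w)

lemma taylor_segment_le_of_hessian_le (hA : ContDiff ℝ 2 A) (hs : Convex ℝ s)
    (hH : ∀ u ∈ s, ∀ w, ⟪fderiv ℝ (∇ A) u w, w⟫ ≤ C * ‖w‖ ^ 2) (hx : x ∈ s) (hy : y ∈ s) :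
    ⟪∇ A y, y - x⟫ ≤ ⟪∇ A x, y - x⟫ + C * ‖y - x‖ ^ 2 ∧
      A y ≤ A x + ⟪∇ A x, y - x⟫ + C / 2 * ‖y - x‖ ^ 2 := by
  obtain ⟨hslope, hvalue⟩ := taylor_le_of_deriv2_le (C := C * ‖y - x‖ ^ 2)
    (fun t _ => hasDerivAt_comp_add_smul (hA.differentiable two_ne_zero) x (y - x) t)
    (fun t _ => hasDerivAt_inner_gradient_comp_add_smul hA.differentiable_gradient x (y - x) t)
    (fun t ht => hH _ (hs.add_smul_sub_mem hx hy ht) _)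
  simp only [one_smul, zero_smul, add_zero, add_sub_cancel] at hslope hvalue
  exact ⟨hslope, by linarith⟩

lemma le_taylor_segment_of_le_hessian (hA : ContDiff ℝ 2 A) (hs : Convex ℝ s)
    (hH : ∀ u ∈ s, ∀ w, C * ‖w‖ ^ 2 ≤ ⟪fderiv ℝ (∇ A) u w, w⟫) (hx : x ∈ s) (hy : y ∈ s) :
    A x + ⟪∇ A x, y - x⟫ + C / 2 * ‖y - x‖ ^ 2 ≤ A y := by
  have hvalue := (taylor_le_of_deriv2_le (C := -(C * ‖y - x‖ ^ 2))
    (fun t _ => (hasDerivAt_comp_add_smul (hA.differentiable two_ne_zero) x (y - x) t).neg)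
    (fun t _ => (hasDerivAt_inner_gradient_comp_add_smul hA.differentiable_gradient x
      (y - x) t).neg)
    (fun t ht => neg_le_neg (hH _ (hs.add_smul_sub_mem hx hy ht) _))).2
  simp only [Pi.neg_apply, one_smul, zero_smul, add_zero, add_sub_cancel] at hvalue
  linarith

lemma taylor_bounds_of_gradient_eq_zero (hA : ContDiff ℝ 2 A) (hs : Convex ℝ s) (hc : 0 < c)
    (hH : ∀ u ∈ s, ∀ w, -(1 / c) * ‖w‖ ^ 2 ≤ ⟪fderiv ℝ (∇ A) u w, w⟫ ∧
      ⟪fderiv ℝ (∇ A) u w, w⟫ ≤ -c * ‖w‖ ^ 2)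
    (hx : x ∈ s) (hgx : ∇ A x = 0) (hy : y ∈ s) :
    ⟪∇ A y, y - x⟫ ≤ -c * ‖y - x‖ ^ 2 ∧ A y ≤ A x - c / 2 * ‖y - x‖ ^ 2 ∧
      2 * c * (A x - A y) ≤ ‖y - x‖ ^ 2 := by
  obtain ⟨hslope, hupper⟩ :=
    taylor_segment_le_of_hessian_le hA hs (fun u hu w => (hH u hu w).2) hx hy
  have hlower := le_taylor_segment_of_le_hessian hA hs (fun u hu w => (hH u hu w).1) hx hy
  simp only [hgx, inner_zero_left, zero_add, add_zero] at hslope hupper hlower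
  refine ⟨hslope, by linarith, ?_⟩
  field_simp at hlower
  linarith

end Hessian

section Flow

variable {E : Type*} [NormedAddCommGroup E] [InnerProductSpace ℝ E] [CompleteSpace E]
  {A : E → ℝ} {γ : ℝ → E} {m : E} {c δ T : ℝ}

def IsDampedGradientFlowLine (A : E → ℝ) (γ : ℝ → E) : Prop :=
  ∀ t, 0 ≤ t → γ t ∈ closedBall (0 : E) 1 ∧ HasDerivAt γ (-((1 - ‖γ t‖ ^ 2) • ∇ A (γ t))) t

namespace IsDampedGradientFlowLine

lemma one_sub_norm_sq_nonneg (hγ : IsDampedGradientFlowLine A γ) {t : ℝ} (ht : 0 ≤ t) :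
    0 ≤ 1 - ‖γ t‖ ^ 2 := by
  have := mem_closedBall_zero_iff.1 (hγ t ht).1
  nlinarith [norm_nonneg (γ t)]

lemma hasDerivAt_comp (hγ : IsDampedGradientFlowLine A γ) (hA : Differentiable ℝ A) {t : ℝ}
    (ht : 0 ≤ t) :
    HasDerivAt (fun t => A (γ t)) (-((1 - ‖γ t‖ ^ 2) * ‖∇ A (γ t)‖ ^ 2)) t := by
  have := (hA (γ t)).hasGradientAt.hasFDerivAt.comp_hasDerivAt t (hγ t ht).2
  rwa [InnerProductSpace.toDual_apply_apply, inner_neg_right, real_inner_smul_right,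
    real_inner_self_eq_norm_sq] at this

lemma antitoneOn_comp (hγ : IsDampedGradientFlowLine A γ) (hA : Differentiable ℝ A) :
    AntitoneOn (fun t => A (γ t)) (Ici 0) :=
  antitoneOn_of_hasDerivAt_nonpos (convex_Ici 0) (fun _ ht => hγ.hasDerivAt_comp hA ht)
    (fun _ ht => neg_nonpos.2 (mul_nonneg (hγ.one_sub_norm_sq_nonneg ht) (sq_nonneg _)))

lemma monotoneOn_norm_sub_sq (hγ : IsDampedGradientFlowLine A γ)
    (hm : ∀ u ∈ closedBall (0 : E) 1, ⟪∇ A u, u - m⟫ ≤ 0) :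
    MonotoneOn (fun t => ‖γ t - m‖ ^ 2) (Ici 0) := by
  refine monotoneOn_of_hasDerivAt_nonneg (convex_Ici 0)
    (fun t ht => ((hγ t ht).2.sub_const m).norm_sq) (fun t ht => ?_)
  rw [inner_neg_right, real_inner_smul_right, real_inner_comm]
  have := mul_nonneg (hγ.one_sub_norm_sq_nonneg ht) (neg_nonneg.2 (hm _ (hγ t ht).1))
  linarith

theorem comp_lt_max_sub (hγ : IsDampedGradientFlowLine A γ) (hA : Differentiable ℝ A)
    (hc : 0 < c) (hm : ‖m‖ ^ 2 < 1 / 10)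
    (hgrad : ∀ u ∈ closedBall (0 : E) 1, ⟪∇ A u, u - m⟫ ≤ -c * ‖u - m‖ ^ 2)
    (hupper : ∀ u ∈ closedBall (0 : E) 1, A u ≤ A m - c / 2 * ‖u - m‖ ^ 2)
    (hδ : 0 ≤ δ) (hγ0 : δ ≤ ‖γ 0 - m‖) (hT : 1 ≤ c * δ ^ 2 * T) :
    A (γ T) < A m - c / 6 := by
  have hT0 : 0 ≤ T := by
    by_contra! hneg
    nlinarith [mul_nonneg hc.le (sq_nonneg δ)]
  by_contra! hlow
  have hspeed : ∀ t ∈ Icc 0 T, c ^ 2 * δ ^ 2 / 5 ≤ (1 - ‖γ t‖ ^ 2) * ‖∇ A (γ t)‖ ^ 2 := by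
    intro t ht
    have hB := (hγ t ht.1).1
    have hval : A m - c / 6 ≤ A (γ t) := hlow.trans (hγ.antitoneOn_comp hA ht.1 hT0 ht.2)
    have hdist : δ ^ 2 ≤ ‖γ t - m‖ ^ 2 :=
      (pow_le_pow_left₀ hδ hγ0 2).trans <| hγ.monotoneOn_norm_sub_sq
        (fun u hu => (hgrad u hu).trans (by nlinarith [sq_nonneg ‖u - m‖]))
        self_mem_Ici ht.1 ht.1
    have hnear : ‖γ t - m‖ ^ 2 ≤ 1 / 3 := by nlinarith [hupper _ hB]
    have hfactor := one_fifth_le_one_sub_norm_sq hnear hm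
    have hδt : δ ≤ ‖γ t - m‖ := (pow_le_pow_iff_left₀ hδ (norm_nonneg _) two_ne_zero).1 hdist
    have hgradient : c ^ 2 * δ ^ 2 ≤ ‖∇ A (γ t)‖ ^ 2 := by
      rw [← mul_pow]
      exact pow_le_pow_left₀ (by positivity) ((mul_le_mul_of_nonneg_left hδt hc.le).trans
        (mul_norm_le_norm_of_inner_le_neg_mul_sq (hgrad _ hB))) 2
    nlinarith [sq_nonneg (c * δ)]
  have hdecay := antitoneOn_of_hasDerivAt_nonpos (convex_Icc 0 T)
    (f := fun t => A (γ t) + c ^ 2 * δ ^ 2 / 5 * t)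
    (fun t ht => (hγ.hasDerivAt_comp hA ht.1).add ((hasDerivAt_id' t).const_mul _))
    (fun t ht => by linarith [hspeed t ht])
    (left_mem_Icc.2 hT0) (right_mem_Icc.2 hT0) hT0
  have hstart : A (γ 0) ≤ A m := by
    nlinarith [hupper _ (hγ 0 le_rfl).1, sq_nonneg ‖γ 0 - m‖]
  simp only [mul_zero, add_zero] at hdecay
  nlinarith [mul_le_mul_of_nonneg_left hT hc.le]

end IsDampedGradientFlowLine

end Flow

theorem stmt8_general {k : ℕ} (c₀ : ℝ) (hc₀ : 0 < c₀) (hc₀1 : c₀ < 1)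
    (A : EuclideanSpace ℝ (Fin k) → ℝ) (hA : ContDiff ℝ 2 A)
    (hHess : ∀ u ∈ closedBall (0 : EuclideanSpace ℝ (Fin k)) 1,
      ∀ w : EuclideanSpace ℝ (Fin k),
        -(1 / c₀) * ‖w‖ ^ 2 ≤ ⟪fderiv ℝ (gradient A) u w, w⟫ ∧
        ⟪fderiv ℝ (gradient A) u w, w⟫ ≤ -c₀ * ‖w‖ ^ 2)
    (m : EuclideanSpace ℝ (Fin k)) (hm : ‖m‖ < c₀ / Real.sqrt 10)
    (hmax : IsMaxOn A (closedBall (0 : EuclideanSpace ℝ (Fin k)) 1) m)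
    (φ : EuclideanSpace ℝ (Fin k) → ℝ → EuclideanSpace ℝ (Fin k))
    (hφ0 : ∀ u, φ u 0 = u)
    (hφball : ∀ u ∈ closedBall (0 : EuclideanSpace ℝ (Fin k)) 1, ∀ t : ℝ, 0 ≤ t →
      φ u t ∈ closedBall (0 : EuclideanSpace ℝ (Fin k)) 1)
    (hφode : ∀ u ∈ closedBall (0 : EuclideanSpace ℝ (Fin k)) 1, ∀ t : ℝ, 0 ≤ t →
      HasDerivAt (φ u) (-((1 - ‖φ u t‖ ^ 2) • gradient A (φ u t))) t)
    (δ : ℝ) (hδ : 0 < δ) :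
    ∃ T : ℝ, 0 ≤ T ∧ ∀ v ∈ closedBall (0 : EuclideanSpace ℝ (Fin k)) 1,
      δ ≤ ‖v - m‖ → A (φ v T) < A 0 - c₀ / 10 ∧ c₀ / 4 < ‖φ v T‖ := by
  have hm2 : ‖m‖ ^ 2 < c₀ ^ 2 / 10 := by
    simpa [div_pow] using pow_lt_pow_left₀ hm (norm_nonneg m) two_ne_zero
  have hmB : m ∈ ball (0 : EuclideanSpace ℝ (Fin k)) 1 :=
    mem_ball_zero_iff.2 (by nlinarith [norm_nonneg m])
  have hgm : ∇ A m = 0 := (hmax.isLocalMax (closedBall_mem_nhds_of_mem hmB)).gradient_eq_zero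
  have hbounds := fun u (hu : u ∈ closedBall 0 1) => taylor_bounds_of_gradient_eq_zero hA
    (convex_closedBall 0 1) hc₀ hHess (ball_subset_closedBall hmB) hgm hu
  set T := 1 / (c₀ * δ ^ 2)
  have hT0 : 0 ≤ T := by positivity
  refine ⟨T, hT0, fun v hv hvm => ?_⟩
  have hflow : IsDampedGradientFlowLine A (φ v) := fun t ht =>
    ⟨hφball v hv t ht, hφode v hv t ht⟩
  have hdrop : A (φ v T) < A m - c₀ / 6 :=
    hflow.comp_lt_max_sub (hA.differentiable two_ne_zero) hc₀ (by nlinarith)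
      (fun u hu => (hbounds u hu).1) (fun u hu => (hbounds u hu).2.1) hδ.le (by rwa [hφ0])
      (mul_one_div_cancel (by positivity)).ge
  have h0 := (hbounds 0 (mem_closedBall_self zero_le_one)).2.2
  have hφT := (hbounds _ (hφball v hv T hT0)).2.2
  rw [zero_sub, norm_neg] at h0
  exact ⟨by nlinarith, lt_norm_of_sq_lt_norm_sub_sq (by nlinarith) hm2⟩

/-- Gradient-flow lemma (Lemma 5.5): for a `C²` function `A : \bar B^k → [0,∞)` with
Hessian pinched between `-(1/c₀)·Id` and `-c₀·Id`, unique maximum at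
`m ∈ B^k_{c₀/√10}`, and `φ` the flow of `u ↦ -(1-|u|²)∇A(u)` on the closed unit
ball, for any `0 < δ < 1/4` there is `T = T(δ, c₀, A) ≥ 0` such that every `v` in
the closed ball with `|v - m| ≥ δ` satisfies `A(φ(v,T)) < A(0) - c₀/10` and
`|φ(v,T)| > c₀/4`. -/
theorem stmt8 {k : ℕ} (c₀ : ℝ) (hc₀ : 0 < c₀) (hc₀1 : c₀ < 1)
    (A : EuclideanSpace ℝ (Fin k) → ℝ) (hA : ContDiff ℝ 2 A)
    (hApos : ∀ u ∈ closedBall (0 : EuclideanSpace ℝ (Fin k)) 1, 0 ≤ A u)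
    (hHess : ∀ u ∈ closedBall (0 : EuclideanSpace ℝ (Fin k)) 1,
      ∀ w : EuclideanSpace ℝ (Fin k),
        -(1 / c₀) * ‖w‖ ^ 2 ≤ ⟪fderiv ℝ (gradient A) u w, w⟫ ∧
        ⟪fderiv ℝ (gradient A) u w, w⟫ ≤ -c₀ * ‖w‖ ^ 2)
    (m : EuclideanSpace ℝ (Fin k)) (hm : ‖m‖ < c₀ / Real.sqrt 10)
    (hmax : IsMaxOn A (closedBall (0 : EuclideanSpace ℝ (Fin k)) 1) m)
    (huniq : ∀ u ∈ closedBall (0 : EuclideanSpace ℝ (Fin k)) 1, A u = A m → u = m)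
    (φ : EuclideanSpace ℝ (Fin k) → ℝ → EuclideanSpace ℝ (Fin k))
    (hφ0 : ∀ u, φ u 0 = u)
    (hφball : ∀ u ∈ closedBall (0 : EuclideanSpace ℝ (Fin k)) 1, ∀ t : ℝ, 0 ≤ t →
      φ u t ∈ closedBall (0 : EuclideanSpace ℝ (Fin k)) 1)
    (hφode : ∀ u ∈ closedBall (0 : EuclideanSpace ℝ (Fin k)) 1, ∀ t : ℝ, 0 ≤ t →
      HasDerivAt (φ u) (-((1 - ‖φ u t‖ ^ 2) • gradient A (φ u t))) t)
    (δ : ℝ) (hδ : 0 < δ) (hδ4 : δ < 1 / 4) :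
    ∃ T : ℝ, 0 ≤ T ∧ ∀ v ∈ closedBall (0 : EuclideanSpace ℝ (Fin k)) 1,
      δ ≤ ‖v - m‖ → A (φ v T) < A 0 - c₀ / 10 ∧ c₀ / 4 < ‖φ v T‖ :=
  stmt8_general c₀ hc₀ hc₀1 A hA hHess m hm hmax φ hφ0 hφball hφode δ hδ
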